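/- Let s ≥ 2 and let F be a stable 3-graph with vertex set [n] that has property U(s, 2s+1). Suppose M₀ is a matching of size s in the shadow ∂F such that every edge of M₀ is disjoint from {1, 2}. Then for every e ∈ M₀, the set e ∪ {2} is not an edge of F. -/
import Mathlib

open Finset

/-- `F₁ ≺ F₂`: same size, and the `i`-th smallest element of `F₁` is at most
the `i`-th smallest element of `F₂`. -/
def PrecS (A B : Finset ℕ) : Prop :=
  A.card = B.card ∧
    ∀ i, i < A.card → (A.sort (· ≤ ·)).getD i 0 ≤ (B.sort (· ≤ ·)).getD i 0

/-- A family of subsets of `[n] = {1,…,n}` is stable (shifted). -/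
def IsStable (n : ℕ) (F : Finset (Finset ℕ)) : Prop :=
  ∀ A B : Finset ℕ, A ⊆ Finset.Icc 1 n → B ∈ F → PrecS A B → A ∈ F

/-- Property `U(s, q)`: any `s` edges (repetitions allowed) have union of size at most `q`. -/
def HasU (F : Finset (Finset ℕ)) (s q : ℕ) : Prop :=
  ∀ f : Fin s → Finset ℕ, (∀ i, f i ∈ F) → (Finset.univ.biUnion f).card ≤ q

/-- Matching number: the maximum size of a set of pairwise disjoint edges of `F`. -/
def matchNum (F : Finset (Finset ℕ)) : ℕ :=
  (F.powerset.filter fun M => ∀ a ∈ M, ∀ b ∈ M, a ≠ b → Disjoint a b).sup Finset.card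

/-- Shadow of a 3-uniform family: all 2-element subsets of its edges. -/
def shadow2 (F : Finset (Finset ℕ)) : Finset (Finset ℕ) :=
  F.biUnion fun f => f.powersetCard 2

/-- Deletion of the first `i` vertices: edges disjoint from `[i] = {1,…,i}`. -/
def del (F : Finset (Finset ℕ)) (i : ℕ) : Finset (Finset ℕ) :=
  F.filter fun e => Disjoint e (Finset.Icc 1 i)

lemma sort_triple {a b c : ℕ} (h1 : a < b) (h2 : b < c) :
    ({a, b, c} : Finset ℕ).sort (· ≤ ·) = [a, b, c] := by
  rw [Finset.sort_insert, Finset.sort_insert, Finset.sort_singleton]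
  · intro x hx; simp at hx; omega
  · simp; omega
  · intro x hx; simp at hx; rcases hx with h | h <;> omega
  · simp; omega

lemma precS_triple {a b c a' b' c' : ℕ} (h1 : a < b) (h2 : b < c)
    (h1' : a' < b') (h2' : b' < c') (ha : a ≤ a') (hb : b ≤ b') (hc : c ≤ c') :
    PrecS {a, b, c} {a', b', c'} := by
  constructor
  · rw [Finset.card_insert_of_notMem (by simp; omega),
      Finset.card_insert_of_notMem (by simp; omega),
      Finset.card_insert_of_notMem (by simp; omega),
      Finset.card_insert_of_notMem (by simp; omega)]
    simp
  · intro i hi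
    rw [sort_triple h1 h2, sort_triple h1' h2']
    rw [Finset.card_insert_of_notMem (by simp; omega),
      Finset.card_insert_of_notMem (by simp; omega), Finset.card_singleton] at hi
    interval_cases i <;> simpa

/-- Any shadow edge avoiding `{1,2}` extends by `1` to an edge of `F`. -/
lemma ext_one (n : ℕ) (F : Finset (Finset ℕ))
    (hF : ∀ e ∈ F, e ⊆ Finset.Icc 1 n ∧ e.card = 3)
    (hst : IsStable n F) (e : Finset ℕ) (he : e ∈ shadow2 F)
    (hav : Disjoint e ({1, 2} : Finset ℕ)) : e ∪ {1} ∈ F := by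
  simp only [shadow2, Finset.mem_biUnion, Finset.mem_powersetCard] at he
  obtain ⟨f, hfF, hef, hecard⟩ := he
  obtain ⟨hfn, hf3⟩ := hF f hfF
  have hss : e ⊂ f :=
    Finset.ssubset_iff_subset_ne.mpr ⟨hef, fun h => by rw [h] at hecard; omega⟩
  obtain ⟨v, hvf, hve⟩ := Finset.exists_of_ssubset hss
  have hfeq : f = insert v e := by
    apply (Finset.eq_of_subset_of_card_le ?_ ?_).symm
    · intro x hx; simp only [Finset.mem_insert] at hx
      rcases hx with h | h
      · exact h ▸ hvf
      · exact hef h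
    · rw [Finset.card_insert_of_notMem hve]; omega
  obtain ⟨a, b, hab, heab⟩ := Finset.card_eq_two.mp hecard
  have key : ∀ a b : ℕ, a < b → e = {a, b} → e ∪ {1} ∈ F := by
    intro a b hlt heab
    have ha3 : 3 ≤ a := by
      have h1 : a ∈ Finset.Icc 1 n := hfn (hef (by rw [heab]; simp))
      have h2 : a ∉ ({1, 2} : Finset ℕ) :=
        Finset.disjoint_left.mp hav (by rw [heab]; simp)
      simp at h1 h2; omega
    have hv1 : 1 ≤ v := by
      have := hfn hvf; simp at this; omega
    have hva : v ≠ a := by rintro rfl; exact hve (by rw [heab]; simp)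
    have hvb : v ≠ b := by rintro rfl; exact hve (by rw [heab]; simp)
    have hn1 : (1 : ℕ) ∈ Finset.Icc 1 n := by
      have := hfn hvf; simp at this ⊢; omega
    have hsub : e ∪ {1} ⊆ Finset.Icc 1 n :=
      Finset.union_subset (hef.trans hfn) (by simpa using hn1)
    have he1 : e ∪ {1} = ({1, a, b} : Finset ℕ) := by
      rw [heab]; ext x; simp; tauto
    rw [he1]
    apply hst _ f (he1 ▸ hsub) hfF
    rw [hfeq, heab]
    rcases lt_trichotomy v a with hcase | hcase | hcase
    · have hveq : insert v ({a, b} : Finset ℕ) = {v, a, b} := rfl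
      rw [hveq]
      exact precS_triple (by omega) hlt hcase hlt hv1 le_rfl le_rfl
    · exact absurd hcase hva.elim
    · rcases lt_trichotomy v b with hcase2 | hcase2 | hcase2
      · have hveq : insert v ({a, b} : Finset ℕ) = {a, v, b} := by ext x; simp; tauto
        rw [hveq]
        exact precS_triple (by omega) hlt hcase hcase2 (by omega) (le_of_lt hcase) le_rfl
      · exact absurd hcase2 hvb.elim
      · have hveq : insert v ({a, b} : Finset ℕ) = {a, b, v} := by ext x; simp; tauto
        rw [hveq]
        exact precS_triple (by omega) hlt hlt hcase2 (by omega) (by omega) (le_of_lt hcase2)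
  rcases lt_or_gt_of_ne hab with h | h
  · exact key a b h heab
  · exact key b a h (by rw [heab, Finset.pair_comm])

/-- Claim 2 of Lemma 3.2: if M₀ is a matching of size s in the shadow avoiding
{1,2}, then no edge of M₀ extends by the vertex 2 to an edge of F. -/
theorem matching_avoid_two (n s : ℕ) (hs : 2 ≤ s)
    (F : Finset (Finset ℕ))
    (hF : ∀ e ∈ F, e ⊆ Finset.Icc 1 n ∧ e.card = 3)
    (hst : IsStable n F)
    (hU : HasU F s (2 * s + 1))
    (M₀ : Finset (Finset ℕ))
    (hM₀ : M₀ ⊆ shadow2 F)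
    (hcard : M₀.card = s)
    (hdisj : ∀ a ∈ M₀, ∀ b ∈ M₀, a ≠ b → Disjoint a b)
    (havoid : ∀ e ∈ M₀, Disjoint e ({1, 2} : Finset ℕ)) :
    ∀ e ∈ M₀, e ∪ {2} ∉ F := by
  intro e₀ he₀ hmem
  classical
  set E : Finset ℕ → Finset ℕ := fun e' => if e' = e₀ then e₀ ∪ {2} else e' ∪ {1} with hE
  have hEF : ∀ e' ∈ M₀, E e' ∈ F := by
    intro e' he'
    simp only [hE]
    split_ifs with h
    · exact hmem
    · exact ext_one n F hF hst e' (hM₀ he') (havoid e' he')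
  have hEsup : ∀ e', e' ∈ M₀ → e' ⊆ E e' := by
    intro e' he'
    simp only [hE]
    split_ifs with h
    · subst h; exact Finset.subset_union_left
    · exact Finset.subset_union_left
  let φ : {x // x ∈ M₀} ≃ Fin s := M₀.equivFinOfCardEq hcard
  set g : Fin s → Finset ℕ := fun i => E ((φ.symm i : {x // x ∈ M₀}) : Finset ℕ) with hg
  have hgF : ∀ i, g i ∈ F := fun i => hEF _ (φ.symm i).2
  have hUb := hU g hgF
  have hcov : ∀ e', e' ∈ M₀ → E e' ⊆ Finset.univ.biUnion g := by
    intro e' he' x hx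
    rw [Finset.mem_biUnion]
    refine ⟨φ ⟨e', he'⟩, Finset.mem_univ _, ?_⟩
    simpa [hg, Equiv.symm_apply_apply] using hx
  have hsub : (M₀.biUnion (fun a => a) ∪ {1, 2}) ⊆ Finset.univ.biUnion g := by
    intro x hx
    rw [Finset.mem_union] at hx
    rcases hx with hx | hx
    · rw [Finset.mem_biUnion] at hx
      obtain ⟨e', he', hxe⟩ := hx
      exact hcov e' he' (hEsup e' he' hxe)
    · simp only [Finset.mem_insert, Finset.mem_singleton] at hx
      rcases hx with rfl | rfl
      · obtain ⟨e₁, he₁, hne⟩ := Finset.exists_mem_ne (s := M₀) (by omega) e₀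
        apply hcov e₁ he₁
        simp [hE, hne]
      · apply hcov e₀ he₀
        simp [hE]
  have hcard2 : ∀ e' ∈ M₀, e'.card = 2 := by
    intro e' he'
    have hmem' := hM₀ he'
    simp only [shadow2, Finset.mem_biUnion, Finset.mem_powersetCard] at hmem'
    obtain ⟨f, -, -, h⟩ := hmem'
    exact h
  have hbcard : (M₀.biUnion (fun a => a)).card = 2 * s := by
    rw [Finset.card_biUnion (fun a ha b hb hne => hdisj a ha b hb hne)]
    rw [Finset.sum_congr rfl (fun e' he' => hcard2 e' he')]
    simp [hcard, mul_comm]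
  have hdisj12 : Disjoint (M₀.biUnion (fun a => a)) ({1, 2} : Finset ℕ) := by
    rw [Finset.disjoint_left]
    intro x hx hx2
    rw [Finset.mem_biUnion] at hx
    obtain ⟨e', he', hxe⟩ := hx
    exact Finset.disjoint_left.mp (havoid e' he') hxe hx2
  have htot : (M₀.biUnion (fun a => a) ∪ {1, 2}).card = 2 * s + 2 := by
    rw [Finset.card_union_of_disjoint hdisj12, hbcard]
    rfl
  have hle := Finset.card_le_card hsub
  omega
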